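/- A coarse space (X,𝓔) whose coarse structure has a linearly ordered base (a base totally ordered by inclusion) is normal. -/

import Mathlib

def relComp {X : Type*} (ε δ : Set (X × X)) : Set (X × X) :=
  {p | ∃ y, (p.1, y) ∈ ε ∧ (y, p.2) ∈ δ}

def relInv {X : Type*} (ε : Set (X × X)) : Set (X × X) :=
  {p | (p.2, p.1) ∈ ε}

def IsBallStructure {X : Type*} (E : Set (Set (X × X))) : Prop :=
  (∀ ε ∈ E, SetRel.id ⊆ ε) ∧
  (∀ ε ∈ E, ∀ δ ∈ E, ∃ lam ∈ E, relComp ε (relInv δ) ⊆ lam) ∧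
  ⋃₀ E = Set.univ

def IsCoarseStructure {X : Type*} (E : Set (Set (X × X))) : Prop :=
  IsBallStructure E ∧
  ∀ ε ∈ E, ∀ δ : Set (X × X), SetRel.id ⊆ δ → δ ⊆ ε → δ ∈ E

def ball {X : Type*} (ε : Set (X × X)) (x : X) : Set X :=
  {y | (x, y) ∈ ε}

/-- `B(Y,ε) = ⋃_{y ∈ Y} B(y,ε)`. -/
def ballOf {X : Type*} (ε : Set (X × X)) (Y : Set X) : Set X :=
  {x | ∃ y ∈ Y, (y, x) ∈ ε}

def IsBoundedIn {X : Type*} (E : Set (Set (X × X))) (B : Set X) : Prop :=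
  B = ∅ ∨ ∃ x : X, ∃ ε ∈ E, B ⊆ ball ε x

/-- `Y` and `Z` are asymptotically disjoint. -/
def AsympDisjoint {X : Type*} (E : Set (Set (X × X))) (Y Z : Set X) : Prop :=
  ∀ ε ∈ E, IsBoundedIn E (ballOf ε Y ∩ ballOf ε Z)

/-- `U` is an asymptotic neighborhood of `A`. -/
def IsAsympNbhd {X : Type*} (E : Set (Set (X × X))) (U A : Set X) : Prop :=
  AsympDisjoint E A Uᶜ

/-!
The neighbourhood of `Y` is the set of points lying, at some scale `β` of the base, in the
`β`-ball of `Y` but not in that of `Z`; symmetrically for `Z`. Since the base is a chain, the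
scales witnessing membership in both sets would be comparable, and the larger one puts the
point in both balls, so the two sets are disjoint. If a point `x` is `ε`-close both to `Y` and to
some `u` outside the neighbourhood of `Y`, pick `β` in the base absorbing `ε ∘ ε⁻¹`: then `u` is
in the `β`-ball of `Y`, hence also in that of `Z`, so `x` is `β ∘ ε`-close to both `Y` and `Z`,
and asymptotic disjointness of `Y` and `Z` bounds the set of such `x`.
-/

section

variable {X : Type*}

lemma IsBoundedIn.mono {E : Set (Set (X × X))} {A B : Set X} (hB : IsBoundedIn E B)
    (hAB : A ⊆ B) : IsBoundedIn E A := by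
  rcases hB with rfl | ⟨x, ε, hε, hBε⟩
  · exact Or.inl (Set.subset_empty_iff.mp hAB)
  · exact Or.inr ⟨x, ε, hε, hAB.trans hBε⟩

lemma AsympDisjoint.symm {E : Set (Set (X × X))} {Y Z : Set X} (hYZ : AsympDisjoint E Y Z) :
    AsympDisjoint E Z Y := fun ε hε => Set.inter_comm (ballOf ε Y) _ ▸ hYZ ε hε

lemma ballOf_mono {β γ : Set (X × X)} (hβγ : β ⊆ γ) (Y : Set X) : ballOf β Y ⊆ ballOf γ Y :=
  fun _ ⟨y, hy, hyx⟩ => ⟨y, hy, hβγ hyx⟩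

namespace IsCoarseStructure

variable {E : Set (Set (X × X))} (h : IsCoarseStructure E)
include h

lemma relInv_mem {ε : Set (X × X)} (hε : ε ∈ E) : relInv ε ∈ E := by
  obtain ⟨⟨hdiag, hcomp, -⟩, hdown⟩ := h
  have hid : SetRel.id ∈ E := hdown ε hε SetRel.id le_rfl (hdiag ε hε)
  obtain ⟨lam, hlam, hsub⟩ := hcomp SetRel.id hid ε hε
  refine hdown lam hlam (relInv ε) ?_ ?_
  · rintro ⟨a, b⟩ rfl
    exact hdiag ε hε rfl
  · rintro ⟨a, b⟩ hab
    exact hsub ⟨a, rfl, hab⟩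

lemma relComp_mem {ε δ : Set (X × X)} (hε : ε ∈ E) (hδ : δ ∈ E) : relComp ε δ ∈ E := by
  obtain ⟨lam, hlam, hsub⟩ := h.1.2.1 ε hε (relInv δ) (h.relInv_mem hδ)
  refine h.2 lam hlam (relComp ε δ) ?_ hsub
  rintro ⟨a, b⟩ rfl
  exact ⟨a, h.1.1 ε hε rfl, h.1.1 δ hδ rfl⟩

end IsCoarseStructure

def sepNbhd (𝓑 : Set (Set (X × X))) (Y Z : Set X) : Set X :=
  {x | ∃ β ∈ 𝓑, x ∈ ballOf β Y ∧ x ∉ ballOf β Z}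

lemma disjoint_sepNbhd {𝓑 : Set (Set (X × X))} (hlin : ∀ b ∈ 𝓑, ∀ c ∈ 𝓑, b ⊆ c ∨ c ⊆ b)
    (Y Z : Set X) : Disjoint (sepNbhd 𝓑 Y Z) (sepNbhd 𝓑 Z Y) := by
  rw [Set.disjoint_left]
  rintro x ⟨β, hβ, hxYβ, hxZβ⟩ ⟨γ, hγ, hxZγ, hxYγ⟩
  rcases hlin β hβ γ hγ with hβγ | hγβ
  · exact hxYγ (ballOf_mono hβγ Y hxYβ)
  · exact hxZβ (ballOf_mono hγβ Z hxZγ)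

lemma ballOf_inter_ballOf_compl_sepNbhd_subset {𝓑 : Set (Set (X × X))} {ε β : Set (X × X)}
    (hβ : β ∈ 𝓑) (hβid : SetRel.id ⊆ β) (hεβ : relComp ε (relInv ε) ⊆ β) (Y Z : Set X) :
    ballOf ε Y ∩ ballOf ε (sepNbhd 𝓑 Y Z)ᶜ ⊆
      ballOf (relComp β ε) Y ∩ ballOf (relComp β ε) Z := by
  rintro x ⟨⟨y, hy, hyx⟩, ⟨u, hu, hux⟩⟩
  have huY : u ∈ ballOf β Y := ⟨y, hy, hεβ ⟨x, hyx, hux⟩⟩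
  obtain ⟨z, hz, hzu⟩ : u ∈ ballOf β Z := by
    by_contra huZ
    exact hu ⟨β, hβ, huY, huZ⟩
  exact ⟨⟨y, hy, y, hβid rfl, hyx⟩, ⟨z, hz, u, hzu, hux⟩⟩

lemma isAsympNbhd_sepNbhd {𝓔 𝓑 : Set (Set (X × X))} (h : IsCoarseStructure 𝓔) (hsub : 𝓑 ⊆ 𝓔)
    (hbase : ∀ ε ∈ 𝓔, ∃ b ∈ 𝓑, ε ⊆ b) {Y Z : Set X} (hYZ : AsympDisjoint 𝓔 Y Z) :
    IsAsympNbhd 𝓔 (sepNbhd 𝓑 Y Z) Y := by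
  intro ε hε
  obtain ⟨β, hβ, hεβ⟩ := hbase _ (h.relComp_mem hε (h.relInv_mem hε))
  have hβid : SetRel.id ⊆ β := h.1.1 β (hsub hβ)
  exact (hYZ _ (h.relComp_mem (hsub hβ) hε)).mono
    (ballOf_inter_ballOf_compl_sepNbhd_subset hβ hβid hεβ Y Z)

end

theorem stmt17 {X : Type*} (𝓔 𝓑 : Set (Set (X × X)))
    (h : IsCoarseStructure 𝓔) (hsub : 𝓑 ⊆ 𝓔)
    (hbase : ∀ ε ∈ 𝓔, ∃ b ∈ 𝓑, ε ⊆ b)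
    (hlin : ∀ b ∈ 𝓑, ∀ c ∈ 𝓑, b ⊆ c ∨ c ⊆ b)
    (Y Z : Set X) (hYZ : AsympDisjoint 𝓔 Y Z) :
    ∃ U V : Set X, Disjoint U V ∧ IsAsympNbhd 𝓔 U Y ∧ IsAsympNbhd 𝓔 V Z :=
  ⟨sepNbhd 𝓑 Y Z, sepNbhd 𝓑 Z Y, disjoint_sepNbhd hlin Y Z,
    isAsympNbhd_sepNbhd h hsub hbase hYZ, isAsympNbhd_sepNbhd h hsub hbase hYZ.symm⟩
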